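/- arXiv:2201.00974 — 5 statements merged into one kernel-verified Lean document; each statement's English description precedes it below -/
import Mathlib

section
/- Let ω ⊂ ℝᵈ be a bounded domain, β > 0, and let φ, ψ be twice continuously differentiable functions on ω satisfying -Δψ + c₀ψ = -βφ and -Δφ + c₀φ = ψ in ω, where c₀ ≥ 0 is a continuous function. Then -Δ(ψ² + βφ²) + c₀(ψ² + βφ²) ≤ 0 pointwise in ω. -/
/-!
The product rule for second directional derivatives gives
`Δ(ψ²) = 2ψΔψ + 2|∇ψ|²`, and similarly for `φ`. Substituting `Δψ = c₀ψ + βφ` and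
`Δφ = c₀φ - ψ`, the cross terms `2βψφ` cancel and
`-Δ(ψ² + βφ²) + c₀(ψ² + βφ²) = -c₀(ψ² + βφ²) - 2|∇ψ|² - 2β|∇φ|² ≤ 0`.
-/

/-- The Laplacian of `f : ℝᵈ → ℝ`, as the sum of second partial derivatives. -/
noncomputable def lap (d : ℕ) (f : EuclideanSpace ℝ (Fin d) → ℝ)
    (x : EuclideanSpace ℝ (Fin d)) : ℝ :=
  ∑ i : Fin d,
    fderiv ℝ (fun y => fderiv ℝ f y (EuclideanSpace.single i (1 : ℝ))) x
      (EuclideanSpace.single i (1 : ℝ))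

open Filter Topology

section SecondDirectionalDerivative

variable {E : Type*} [NormedAddCommGroup E] [NormedSpace ℝ E] {f g : E → ℝ} {x : E}

theorem ContDiffAt.eventually_differentiableAt (hf : ContDiffAt ℝ 2 f x) :
    ∀ᶠ y in 𝓝 x, DifferentiableAt ℝ f y :=
  (hf.eventually (by simp)).mono fun _ hy => hy.differentiableAt two_ne_zero

theorem ContDiffAt.differentiableAt_fderiv_apply (hf : ContDiffAt ℝ 2 f x) (v : E) :
    DifferentiableAt ℝ (fun y => fderiv ℝ f y v) x :=
  ((hf.fderiv_right (m := 1) le_rfl).differentiableAt one_ne_zero).clm_apply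
    (differentiableAt_const v)

theorem fderiv_fderiv_apply_add (hf : ContDiffAt ℝ 2 f x) (hg : ContDiffAt ℝ 2 g x) (v : E) :
    fderiv ℝ (fun y => fderiv ℝ (fun z => f z + g z) y v) x v =
      fderiv ℝ (fun y => fderiv ℝ f y v) x v + fderiv ℝ (fun y => fderiv ℝ g y v) x v := by
  have hfirst : (fun y => fderiv ℝ (fun z => f z + g z) y v) =ᶠ[𝓝 x]
      fun y => fderiv ℝ f y v + fderiv ℝ g y v := by
    filter_upwards [hf.eventually_differentiableAt, hg.eventually_differentiableAt]
      with y hfy hgy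
    rw [fderiv_fun_add hfy hgy, add_apply]
  rw [hfirst.fderiv_eq,
    fderiv_fun_add (hf.differentiableAt_fderiv_apply v) (hg.differentiableAt_fderiv_apply v),
    add_apply]

theorem fderiv_fderiv_apply_const_mul (hf : ContDiffAt ℝ 2 f x) (c : ℝ) (v : E) :
    fderiv ℝ (fun y => fderiv ℝ (fun z => c * f z) y v) x v =
      c * fderiv ℝ (fun y => fderiv ℝ f y v) x v := by
  have hfirst : (fun y => fderiv ℝ (fun z => c * f z) y v) =ᶠ[𝓝 x]
      fun y => c * fderiv ℝ f y v := by
    filter_upwards [hf.eventually_differentiableAt] with y hfy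
    rw [fderiv_const_mul hfy, smul_apply, smul_eq_mul]
  rw [hfirst.fderiv_eq, fderiv_const_mul (hf.differentiableAt_fderiv_apply v),
    smul_apply, smul_eq_mul]

theorem fderiv_fderiv_apply_mul (hf : ContDiffAt ℝ 2 f x) (hg : ContDiffAt ℝ 2 g x) (v : E) :
    fderiv ℝ (fun y => fderiv ℝ (fun z => f z * g z) y v) x v =
      f x * fderiv ℝ (fun y => fderiv ℝ g y v) x v + 2 * fderiv ℝ f x v * fderiv ℝ g x v
        + g x * fderiv ℝ (fun y => fderiv ℝ f y v) x v := by
  have hfirst : (fun y => fderiv ℝ (fun z => f z * g z) y v) =ᶠ[𝓝 x]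
      fun y => f y * fderiv ℝ g y v + g y * fderiv ℝ f y v := by
    filter_upwards [hf.eventually_differentiableAt, hg.eventually_differentiableAt]
      with y hfy hgy
    rw [fderiv_fun_mul hfy hgy]
    rfl
  have hf₀ := hf.differentiableAt two_ne_zero
  have hg₀ := hg.differentiableAt two_ne_zero
  have hf₁ := hf.differentiableAt_fderiv_apply v
  have hg₁ := hg.differentiableAt_fderiv_apply v
  rw [hfirst.fderiv_eq, fderiv_fun_add (hf₀.fun_mul hg₁) (hg₀.fun_mul hf₁),
    fderiv_fun_mul hf₀ hg₁, fderiv_fun_mul hg₀ hf₁]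
  simp only [add_apply, smul_apply, smul_eq_mul]
  ring

end SecondDirectionalDerivative

section Laplacian

variable {d : ℕ} {f g : EuclideanSpace ℝ (Fin d) → ℝ} {x : EuclideanSpace ℝ (Fin d)}

theorem lap_add (hf : ContDiffAt ℝ 2 f x) (hg : ContDiffAt ℝ 2 g x) :
    lap d (fun y => f y + g y) x = lap d f x + lap d g x := by
  simp only [lap, fderiv_fderiv_apply_add hf hg, Finset.sum_add_distrib]

theorem lap_const_mul (hf : ContDiffAt ℝ 2 f x) (c : ℝ) :
    lap d (fun y => c * f y) x = c * lap d f x := by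
  simp only [lap, fderiv_fderiv_apply_const_mul hf, Finset.mul_sum]

theorem lap_sq (hf : ContDiffAt ℝ 2 f x) :
    lap d (fun y => f y ^ 2) x =
      2 * f x * lap d f x + 2 * ∑ i, fderiv ℝ f x (EuclideanSpace.single i 1) ^ 2 := by
  simp only [sq, lap, fderiv_fderiv_apply_mul hf hf, Finset.mul_sum, ← Finset.sum_add_distrib]
  refine Finset.sum_congr rfl fun i _ => ?_
  ring

end Laplacian

theorem stmt_0_general (d : ℕ) (ω : Set (EuclideanSpace ℝ (Fin d)))
    (hω_open : IsOpen ω)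
    (β : ℝ) (hβ : 0 < β)
    (c₀ φ ψ : EuclideanSpace ℝ (Fin d) → ℝ)
    (hc₀_nonneg : ∀ x ∈ ω, 0 ≤ c₀ x)
    (hφ : ContDiffOn ℝ 2 φ ω) (hψ : ContDiffOn ℝ 2 ψ ω)
    (heq1 : ∀ x ∈ ω, -lap d ψ x + c₀ x * ψ x = -β * φ x)
    (heq2 : ∀ x ∈ ω, -lap d φ x + c₀ x * φ x = ψ x) :
    ∀ x ∈ ω,
      -lap d (fun y => (ψ y) ^ 2 + β * (φ y) ^ 2) x
        + c₀ x * ((ψ x) ^ 2 + β * (φ x) ^ 2) ≤ 0 := by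
  intro x hx
  have hψx : ContDiffAt ℝ 2 ψ x := hψ.contDiffAt (hω_open.mem_nhds hx)
  have hφx : ContDiffAt ℝ 2 φ x := hφ.contDiffAt (hω_open.mem_nhds hx)
  have hlapψ : lap d ψ x = c₀ x * ψ x + β * φ x := by linarith [heq1 x hx]
  have hlapφ : lap d φ x = c₀ x * φ x - ψ x := by linarith [heq2 x hx]
  have hc₀x := hc₀_nonneg x hx
  rw [lap_add (hψx.pow 2) (contDiffAt_const.mul (hφx.pow 2)), lap_const_mul (hφx.pow 2),
    lap_sq hψx, lap_sq hφx, hlapψ, hlapφ]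
  calc _ = -(c₀ x * ψ x ^ 2 + β * (c₀ x * φ x ^ 2)
          + 2 * ∑ i, fderiv ℝ ψ x (EuclideanSpace.single i 1) ^ 2
          + 2 * β * ∑ i, fderiv ℝ φ x (EuclideanSpace.single i 1) ^ 2) := by ring
    _ ≤ 0 := neg_nonpos.mpr (by positivity)

/-- Special case of Lemma 3.1 with `𝓛 = -Δ + c₀`: if `-Δψ + c₀ψ = -βφ` and
`-Δφ + c₀φ = ψ` on a bounded domain `ω`, then `-Δ(ψ² + βφ²) + c₀(ψ² + βφ²) ≤ 0` in `ω`. -/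
theorem stmt_0 (d : ℕ) (ω : Set (EuclideanSpace ℝ (Fin d)))
    (hω_open : IsOpen ω) (hω_bdd : Bornology.IsBounded ω)
    (β : ℝ) (hβ : 0 < β)
    (c₀ φ ψ : EuclideanSpace ℝ (Fin d) → ℝ)
    (hc₀_cont : ContinuousOn c₀ ω) (hc₀_nonneg : ∀ x ∈ ω, 0 ≤ c₀ x)
    (hφ : ContDiffOn ℝ 2 φ ω) (hψ : ContDiffOn ℝ 2 ψ ω)
    (heq1 : ∀ x ∈ ω, -lap d ψ x + c₀ x * ψ x = -β * φ x)
    (heq2 : ∀ x ∈ ω, -lap d φ x + c₀ x * φ x = ψ x) :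
    ∀ x ∈ ω,
      -lap d (fun y => (ψ y) ^ 2 + β * (φ y) ^ 2) x
        + c₀ x * ((ψ x) ^ 2 + β * (φ x) ^ 2) ≤ 0 :=
  stmt_0_general d ω hω_open β hβ c₀ φ ψ hc₀_nonneg hφ hψ heq1 heq2
end

section
/- Let 𝓛_h be the five-point finite difference Laplacian on the uniform grid of (0,1)² with mesh size h = 1/N, let β > 0, and let grid functions Φ, Ψ satisfy (𝓛_h Ψ)_{i,j} = -β Φ_{i,j} and (𝓛_h Φ)_{i,j} = Ψ_{i,j} at all interior indices 1 ≤ i,j ≤ N-1. Then (𝓛_h(Ψ² + βΦ²))_{i,j} ≤ 0 at all interior indices, where squares are taken componentwise. -/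
/-- The five-point finite difference Laplacian on the uniform grid of `(0,1)²`
with mesh size `h = 1/N`, evaluated at interior indices `1 ≤ i, j ≤ N-1`. -/
noncomputable def Lh (N : ℕ) (z : ℕ → ℕ → ℝ) (i j : ℕ) : ℝ :=
  -((z (i - 1) j + z (i + 1) j - 4 * z i j + z i (j - 1) + z i (j + 1)) /
      ((1 / (N : ℝ)) ^ 2))

lemma Lh_add_const_mul (N : ℕ) (f g : ℕ → ℕ → ℝ) (c : ℝ) (i j : ℕ) :
    Lh N (fun a b => f a b + c * g a b) i j = Lh N f i j + c * Lh N g i j := by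
  unfold Lh
  ring

/-- The defect `2 z 𝓛_h z - 𝓛_h (z²)` is `h⁻²` times the sum of the squared differences
between `z i j` and its four neighbours. -/
lemma Lh_sq_le (N : ℕ) (z : ℕ → ℕ → ℝ) (i j : ℕ) :
    Lh N (fun a b => z a b ^ 2) i j ≤ 2 * z i j * Lh N z i j := by
  have hsq : 2 * z i j * (z (i - 1) j + z (i + 1) j - 4 * z i j + z i (j - 1) + z i (j + 1)) ≤
      z (i - 1) j ^ 2 + z (i + 1) j ^ 2 - 4 * z i j ^ 2 + z i (j - 1) ^ 2 + z i (j + 1) ^ 2 := by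
    nlinarith [sq_nonneg (z (i - 1) j - z i j), sq_nonneg (z (i + 1) j - z i j),
      sq_nonneg (z i (j - 1) - z i j), sq_nonneg (z i (j + 1) - z i j)]
  unfold Lh
  rw [mul_neg, mul_div_assoc', neg_le_neg_iff]
  exact div_le_div_of_nonneg_right hsq (sq_nonneg _)

theorem stmt_2_general (N : ℕ) (β : ℝ) (hβ : 0 < β) (Φ Ψ : ℕ → ℕ → ℝ)
    (h1 : ∀ i j : ℕ, 1 ≤ i → i ≤ N - 1 → 1 ≤ j → j ≤ N - 1 →
      Lh N Ψ i j = -β * Φ i j)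
    (h2 : ∀ i j : ℕ, 1 ≤ i → i ≤ N - 1 → 1 ≤ j → j ≤ N - 1 →
      Lh N Φ i j = Ψ i j) :
    ∀ i j : ℕ, 1 ≤ i → i ≤ N - 1 → 1 ≤ j → j ≤ N - 1 →
      Lh N (fun a b => (Ψ a b) ^ 2 + β * (Φ a b) ^ 2) i j ≤ 0 := by
  intro i j hi hi' hj hj'
  calc Lh N (fun a b => (Ψ a b) ^ 2 + β * (Φ a b) ^ 2) i j
      = Lh N (fun a b => Ψ a b ^ 2) i j + β * Lh N (fun a b => Φ a b ^ 2) i j :=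
        Lh_add_const_mul N _ _ β i j
    _ ≤ 2 * Ψ i j * Lh N Ψ i j + β * (2 * Φ i j * Lh N Φ i j) :=
        add_le_add (Lh_sq_le N Ψ i j) (mul_le_mul_of_nonneg_left (Lh_sq_le N Φ i j) hβ.le)
    _ = 0 := by
        rw [h1 i j hi hi' hj hj', h2 i j hi hi' hj hj']
        ring

/-- Lemma 4.2: if `𝓛_h Ψ = -β Φ` and `𝓛_h Φ = Ψ` at all interior indices,
then `𝓛_h(Ψ² + βΦ²) ≤ 0` at all interior indices. -/
theorem stmt_2 (N : ℕ) (hN : 2 ≤ N) (β : ℝ) (hβ : 0 < β) (Φ Ψ : ℕ → ℕ → ℝ)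
    (h1 : ∀ i j : ℕ, 1 ≤ i → i ≤ N - 1 → 1 ≤ j → j ≤ N - 1 →
      Lh N Ψ i j = -β * Φ i j)
    (h2 : ∀ i j : ℕ, 1 ≤ i → i ≤ N - 1 → 1 ≤ j → j ≤ N - 1 →
      Lh N Φ i j = Ψ i j) :
    ∀ i j : ℕ, 1 ≤ i → i ≤ N - 1 → 1 ≤ j → j ≤ N - 1 →
      Lh N (fun a b => (Ψ a b) ^ 2 + β * (Φ a b) ^ 2) i j ≤ 0 :=
  stmt_2_general N β hβ Φ Ψ h1 h2
end

section
/- Fix 0 < r < s < 1 and γ > 0, and define g(z) = sinh²(z) + sin²(z), ρ_c(γ) = [g(γr)·g(γ(1-s))]/[g(γs)·g(γ(1-r))], and ρ_e = [r(1-s)]/[s(1-r)]. Then ρ_c(γ) < ρ_e and ρ_c(γ) < 1. -/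
/-! The function `g z = sinh² z + sin² z = (cosh 2z - cos 2z) / 2` is strictly convex, since
`g'' z = 2 (cosh 2z + cos 2z) > 0`, and `g 0 = 0`. Hence `g z / z` is strictly increasing on
`z > 0`, i.e. `g x / g y < x / y` for `0 < x < y`. Applied to `γr < γs` and `γ(1-s) < γ(1-r)`,
this bounds the two factors of `ρ_c` by the two factors `r / s` and `(1-s) / (1-r)` of `ρ_e`,
both of which are less than `1`. -/

open Real Set

section StrictConvexOn

variable {𝕜 : Type*} [Field 𝕜] [LinearOrder 𝕜] [IsStrictOrderedRing 𝕜] {s : Set 𝕜} {f : 𝕜 → 𝕜}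
  {x y : 𝕜}

theorem StrictConvexOn.div_lt_div_of_map_zero (hf : StrictConvexOn 𝕜 s f) (h0 : 0 ∈ s)
    (hf0 : f 0 = 0) (hx : x ∈ s) (hy : y ∈ s) (hx0 : 0 < x) (hxy : x < y) :
    f x / x < f y / y := by
  simpa [hf0] using hf.secant_strict_mono h0 hx hy hx0.ne' (hx0.trans hxy).ne' hxy

theorem StrictConvexOn.map_div_map_lt_div_of_map_zero (hf : StrictConvexOn 𝕜 s f) (h0 : 0 ∈ s)
    (hf0 : f 0 = 0) (hx : x ∈ s) (hy : y ∈ s) (hx0 : 0 < x) (hxy : x < y) (hfy : 0 < f y) :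
    f x / f y < x / y := by
  have hy0 : 0 < y := hx0.trans hxy
  have h := hf.div_lt_div_of_map_zero h0 hf0 hx hy hx0 hxy
  rw [div_lt_div_iff₀ hx0 hy0] at h
  rw [div_lt_div_iff₀ hfy hy0]
  linarith

end StrictConvexOn

namespace Real

theorem deriv_sinh_sq_add_sin_sq :
    deriv (fun z : ℝ => sinh z ^ 2 + sin z ^ 2) = fun z => sinh (2 * z) + sin (2 * z) := by
  funext z
  simp [sinh_two_mul, sin_two_mul]

theorem deriv_sinh_two_mul_add_sin_two_mul :
    deriv (fun z : ℝ => sinh (2 * z) + sin (2 * z)) = fun z => 2 * (cosh (2 * z) + cos (2 * z)) := by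
  funext z
  have h2 : HasDerivAt (fun z : ℝ => 2 * z) 2 z := by simpa using (hasDerivAt_id z).const_mul 2
  exact (h2.sinh.add h2.sin).deriv.trans (by ring)

theorem cosh_add_cos_pos (x : ℝ) : 0 < cosh x + cos x := by
  rcases eq_or_ne x 0 with rfl | hx
  · norm_num
  · linarith [one_lt_cosh.2 hx, neg_one_le_cos x]

theorem strictConvexOn_sinh_sq_add_sin_sq :
    StrictConvexOn ℝ univ (fun z : ℝ => sinh z ^ 2 + sin z ^ 2) := by
  refine strictConvexOn_univ_of_deriv2_pos (by fun_prop) fun z => ?_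
  rw [Function.iterate_succ_apply, Function.iterate_one, deriv_sinh_sq_add_sin_sq,
    deriv_sinh_two_mul_add_sin_two_mul]
  linarith [cosh_add_cos_pos (2 * z)]

theorem sinh_sq_add_sin_sq_pos {x : ℝ} (hx : x ≠ 0) : 0 < sinh x ^ 2 + sin x ^ 2 := by
  have : sinh x ≠ 0 := sinh_ne_zero.2 hx
  positivity

theorem sinh_sq_add_sin_sq_div_lt {x y : ℝ} (hx : 0 < x) (hxy : x < y) :
    (sinh x ^ 2 + sin x ^ 2) / (sinh y ^ 2 + sin y ^ 2) < x / y :=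
  strictConvexOn_sinh_sq_add_sin_sq.map_div_map_lt_div_of_map_zero (mem_univ 0) (by simp)
    (mem_univ x) (mem_univ y) hx hxy (sinh_sq_add_sin_sq_pos (hx.trans hxy).ne')

end Real

/-- With `g(z) = sinh²z + sin²z`, `ρ_c(γ) = g(γr)g(γ(1-s))/(g(γs)g(γ(1-r)))`
and `ρ_e = r(1-s)/(s(1-r))`, for `0 < r < s < 1` and `γ > 0` one has
`ρ_c(γ) < ρ_e` and `ρ_c(γ) < 1`. -/
theorem stmt_8 (r s γ : ℝ) (hr : 0 < r) (hrs : r < s) (hs : s < 1) (hγ : 0 < γ) :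
    (((sinh (γ * r)) ^ 2 + (sin (γ * r)) ^ 2) *
        ((sinh (γ * (1 - s))) ^ 2 + (sin (γ * (1 - s))) ^ 2)) /
      (((sinh (γ * s)) ^ 2 + (sin (γ * s)) ^ 2) *
        ((sinh (γ * (1 - r))) ^ 2 + (sin (γ * (1 - r))) ^ 2)) <
      (r * (1 - s)) / (s * (1 - r)) ∧
    (((sinh (γ * r)) ^ 2 + (sin (γ * r)) ^ 2) *
        ((sinh (γ * (1 - s))) ^ 2 + (sin (γ * (1 - s))) ^ 2)) /
      (((sinh (γ * s)) ^ 2 + (sin (γ * s)) ^ 2) *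
        ((sinh (γ * (1 - r))) ^ 2 + (sin (γ * (1 - r))) ^ 2)) < 1 := by
  have ratio_lt {x y : ℝ} (hx : 0 < x) (hxy : x < y) :
      (sinh (γ * x) ^ 2 + sin (γ * x) ^ 2) / (sinh (γ * y) ^ 2 + sin (γ * y) ^ 2) < x / y := by
    simpa [mul_div_mul_left _ _ hγ.ne'] using
      sinh_sq_add_sin_sq_div_lt (mul_pos hγ hx) (mul_lt_mul_of_pos_left hxy hγ)
  have hs0 : 0 < s := hr.trans hrs
  have h1s : 0 < 1 - s := sub_pos.2 hs
  have hleft := ratio_lt hr hrs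
  have hright := ratio_lt h1s (by linarith : 1 - s < 1 - r)
  rw [mul_div_mul_comm, mul_div_mul_comm r]
  have hρc := mul_lt_mul'' hleft hright (by positivity) (by positivity)
  refine ⟨hρc, hρc.trans (mul_lt_one_of_nonneg_of_lt_one_left (by positivity) ?_ ?_)⟩
  · exact (div_lt_one hs0).2 hrs
  · exact ((div_lt_one (by linarith)).2 (by linarith)).le
end

section
/- Let 0 < r < s < 1 and consider the boundary value problem -e_y'' = -α⁻¹ e_p, -e_p'' = e_y on (0,s) with e_y(0) = e_p(0) = 0 and prescribed values e_y(s) = a, e_p(s) = b. Set γ = (√2/2)α^{-1/4} and q₁(x) = sinh(γ(s-x))sin(γ(s+x)) - sin(γ(s-x))sinh(γ(s+x)), q₂(x) = cosh(γ(s-x))cos(γ(s+x)) - cos(γ(s-x))cosh(γ(s+x)), q₃ = cosh(2γs) - cos(2γs). Then the functions e_y(x) = -(q₂(x)a - 2γ²q₁(x)b)/q₃ and e_p(x) = -(q₁(x)a + 2γ²q₂(x)b)/(2γ²q₃) satisfy the system and the boundary conditions. -/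
/-!
Write `u = γ(s - x)`, `v = γ(s + x)`. Both `q₁` and `q₂` are differences of products `f(u) g(v)`
with `f'' = c f` and `g'' = -c g` (`c = ±1`, `f, g ∈ {sinh, cosh, sin, cos}`). In the second
derivative of such a product the terms `c f g` cancel, leaving `-2γ² f'(u) g'(v)`; hence
`q₁'' = -2γ² q₂` and `q₂'' = 2γ² q₁`, and since `4γ⁴ = α⁻¹` the stated linear combinations solve
the system. The boundary values come from `q₁(0) = q₂(0) = q₁(s) = 0`, `q₂(s) = -q₃`, and
`q₃ ≠ 0` because `cos ≤ 1 < cosh` away from `0`.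
-/

open Real

theorem four_mul_pow_four_eq_inv {α : ℝ} (hα : 0 ≤ α) :
    4 * (√2 / 2 * α ^ (-(1 : ℝ) / 4)) ^ 4 = α⁻¹ := by
  rw [mul_pow, div_pow, ← rpow_natCast (α ^ _), ← rpow_mul hα,
    show √2 ^ 4 = (√2 ^ 2) ^ 2 by ring, sq_sqrt zero_le_two]
  norm_num [rpow_neg_one]
  ring

theorem deriv_deriv_eq_iteratedDeriv_two {𝕜 F : Type*} [NontriviallyNormedField 𝕜]
    [NormedAddCommGroup F] [NormedSpace 𝕜 F] (f : 𝕜 → F) :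
    deriv (deriv f) = iteratedDeriv 2 f := by
  rw [iteratedDeriv_succ, iteratedDeriv_one]

theorem iteratedDeriv_two_comp_sub_mul_comp_add {f f' g g' : ℝ → ℝ} {c : ℝ}
    (hf : ∀ t, HasDerivAt f (f' t) t) (hf' : ∀ t, HasDerivAt f' (c * f t) t)
    (hg : ∀ t, HasDerivAt g (g' t) t) (hg' : ∀ t, HasDerivAt g' (-c * g t) t) (γ s : ℝ) :
    iteratedDeriv 2 (fun x => f (γ * (s - x)) * g (γ * (s + x))) =
      fun x => -2 * γ ^ 2 * f' (γ * (s - x)) * g' (γ * (s + x)) := by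
  have hu : ∀ x, HasDerivAt (fun x => γ * (s - x)) (-γ) x := fun x => by
    simpa using ((hasDerivAt_id x).const_sub s).const_mul γ
  have hv : ∀ x, HasDerivAt (fun x => γ * (s + x)) γ x := fun x => by
    simpa using ((hasDerivAt_id x).const_add s).const_mul γ
  have hP : ∀ x, HasDerivAt (fun x => f (γ * (s - x)) * g (γ * (s + x)))
      (γ * (f (γ * (s - x)) * g' (γ * (s + x)) - f' (γ * (s - x)) * g (γ * (s + x)))) x :=
    fun x => (((hf _).comp x (hu x)).mul ((hg _).comp x (hv x))).congr_deriv
      (by simp only [Function.comp_apply]; ring)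
  have hP' : ∀ x, HasDerivAt
      (fun x => γ * (f (γ * (s - x)) * g' (γ * (s + x)) - f' (γ * (s - x)) * g (γ * (s + x))))
      (-2 * γ ^ 2 * f' (γ * (s - x)) * g' (γ * (s + x))) x := fun x =>
    ((((hf _).comp x (hu x)).mul ((hg' _).comp x (hv x))).sub
      (((hf' _).comp x (hu x)).mul ((hg _).comp x (hv x)))).const_mul γ |>.congr_deriv
      (by simp only [Function.comp_apply]; ring)
  rw [← deriv_deriv_eq_iteratedDeriv_two, funext fun x => (hP x).deriv]
  exact funext fun x => (hP' x).deriv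

namespace SchwarzErrorODE

variable (γ s : ℝ)

noncomputable def q₁ (x : ℝ) : ℝ :=
  sinh (γ * (s - x)) * sin (γ * (s + x)) - sin (γ * (s - x)) * sinh (γ * (s + x))

noncomputable def q₂ (x : ℝ) : ℝ :=
  cosh (γ * (s - x)) * cos (γ * (s + x)) - cos (γ * (s - x)) * cosh (γ * (s + x))

@[fun_prop]
theorem contDiff_q₁ {n : WithTop ℕ∞} : ContDiff ℝ n (q₁ γ s) := by
  unfold q₁; fun_prop

@[fun_prop]
theorem contDiff_q₂ {n : WithTop ℕ∞} : ContDiff ℝ n (q₂ γ s) := by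
  unfold q₂; fun_prop

@[simp] theorem q₁_zero : q₁ γ s 0 = 0 := by simp [q₁, mul_comm]
@[simp] theorem q₂_zero : q₂ γ s 0 = 0 := by simp [q₂, mul_comm]
@[simp] theorem q₁_self : q₁ γ s s = 0 := by simp [q₁]
@[simp] theorem q₂_self : q₂ γ s s = -(cosh (2 * γ * s) - cos (2 * γ * s)) := by
  simp only [q₂, sub_self, mul_zero, cosh_zero, cos_zero, one_mul]; ring_nf

theorem iteratedDeriv_two_q₁ : iteratedDeriv 2 (q₁ γ s) = fun x => -2 * γ ^ 2 * q₂ γ s x := by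
  have h1 := iteratedDeriv_two_comp_sub_mul_comp_add (c := 1) hasDerivAt_sinh
    (fun t => by simpa using hasDerivAt_cosh t) hasDerivAt_sin
    (fun t => by simpa using hasDerivAt_cos t) γ s
  have h2 := iteratedDeriv_two_comp_sub_mul_comp_add (c := -1) hasDerivAt_sin
    (fun t => by simpa using hasDerivAt_cos t) hasDerivAt_sinh
    (fun t => by simpa using hasDerivAt_cosh t) γ s
  unfold q₁
  funext x
  rw [iteratedDeriv_fun_sub (by fun_prop) (by fun_prop), h1, h2, q₂]
  ring

theorem iteratedDeriv_two_q₂ : iteratedDeriv 2 (q₂ γ s) = fun x => 2 * γ ^ 2 * q₁ γ s x := by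
  have h1 := iteratedDeriv_two_comp_sub_mul_comp_add (c := 1) hasDerivAt_cosh
    (fun t => by simpa using hasDerivAt_sinh t) hasDerivAt_cos
    (fun t => by simpa using (hasDerivAt_sin t).fun_neg) γ s
  have h2 := iteratedDeriv_two_comp_sub_mul_comp_add (c := -1) hasDerivAt_cos
    (fun t => by simpa using (hasDerivAt_sin t).fun_neg) hasDerivAt_cosh
    (fun t => by simpa using hasDerivAt_sinh t) γ s
  unfold q₂
  funext x
  rw [iteratedDeriv_fun_sub (by fun_prop) (by fun_prop), h1, h2, q₁]
  ring

end SchwarzErrorODE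

open SchwarzErrorODE

theorem stmt_14_general (r s α a b γ : ℝ) (hr : 0 < r) (hrs : r < s)
    (hα : 0 < α) (hγ : γ = Real.sqrt 2 / 2 * α ^ (-(1 : ℝ) / 4))
    (q1 q2 : ℝ → ℝ) (q3 : ℝ)
    (hq1 : ∀ x, q1 x = sinh (γ * (s - x)) * sin (γ * (s + x)) -
        sin (γ * (s - x)) * sinh (γ * (s + x)))
    (hq2 : ∀ x, q2 x = cosh (γ * (s - x)) * cos (γ * (s + x)) -
        cos (γ * (s - x)) * cosh (γ * (s + x)))
    (hq3 : q3 = cosh (2 * γ * s) - cos (2 * γ * s))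
    (ey ep : ℝ → ℝ)
    (hey : ∀ x, ey x = -((q2 x * a - 2 * γ ^ 2 * q1 x * b) / q3))
    (hep : ∀ x, ep x = -((q1 x * a + 2 * γ ^ 2 * q2 x * b) / (2 * γ ^ 2 * q3))) :
    ey 0 = 0 ∧ ep 0 = 0 ∧ ey s = a ∧ ep s = b ∧
    (∀ x ∈ Set.Ioo 0 s,
      -(deriv (deriv ey) x) = -α⁻¹ * ep x ∧ -(deriv (deriv ep) x) = ey x) := by
  obtain rfl : q1 = q₁ γ s := funext hq1
  obtain rfl : q2 = q₂ γ s := funext hq2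
  obtain rfl := funext hey
  obtain rfl := funext hep
  have hγ0 : 0 < γ := hγ ▸ by positivity
  have hs0 : 0 < s := hr.trans hrs
  have hq3ne : q3 ≠ 0 := by
    rw [hq3, sub_ne_zero]
    exact ((cos_le_one _).trans_lt (one_lt_cosh.2 (by positivity))).ne'
  have hα4 : α⁻¹ = 4 * γ ^ 4 := hγ ▸ (four_mul_pow_four_eq_inv hα.le).symm
  refine ⟨by simp, by simp, ?_, ?_, fun x _ => ⟨?_, ?_⟩⟩
  · simp only [q₁_self, q₂_self, ← hq3]
    field_simp
    ring
  · simp only [q₁_self, q₂_self, ← hq3]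
    field_simp
    ring
  · rw [deriv_deriv_eq_iteratedDeriv_two]
    simp only [iteratedDeriv_fun_neg, iteratedDeriv_div_const]
    rw [iteratedDeriv_fun_sub (by fun_prop) (by fun_prop)]
    simp only [iteratedDeriv_mul_const_field, iteratedDeriv_const_mul_field, iteratedDeriv_two_q₁,
      iteratedDeriv_two_q₂, hα4]
    field_simp
    ring
  · rw [deriv_deriv_eq_iteratedDeriv_two]
    simp only [iteratedDeriv_fun_neg, iteratedDeriv_div_const]
    rw [iteratedDeriv_fun_add (by fun_prop) (by fun_prop)]
    simp only [iteratedDeriv_mul_const_field, iteratedDeriv_const_mul_field, iteratedDeriv_two_q₁,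
      iteratedDeriv_two_q₂]
    field_simp
    ring

/-- Verification of the explicit solution formulas of Appendix A for the
coupled 1D error system `-e_y'' = -α⁻¹ e_p`, `-e_p'' = e_y` on `(0,s)` with
`e_y(0) = e_p(0) = 0`, `e_y(s) = a`, `e_p(s) = b`, where `γ = (√2/2)α^{-1/4}`. -/
theorem stmt_14 (r s α a b γ : ℝ) (hr : 0 < r) (hrs : r < s) (hs : s < 1)
    (hα : 0 < α) (hγ : γ = Real.sqrt 2 / 2 * α ^ (-(1 : ℝ) / 4))
    (q1 q2 : ℝ → ℝ) (q3 : ℝ)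
    (hq1 : ∀ x, q1 x = sinh (γ * (s - x)) * sin (γ * (s + x)) -
        sin (γ * (s - x)) * sinh (γ * (s + x)))
    (hq2 : ∀ x, q2 x = cosh (γ * (s - x)) * cos (γ * (s + x)) -
        cos (γ * (s - x)) * cosh (γ * (s + x)))
    (hq3 : q3 = cosh (2 * γ * s) - cos (2 * γ * s))
    (ey ep : ℝ → ℝ)
    (hey : ∀ x, ey x = -((q2 x * a - 2 * γ ^ 2 * q1 x * b) / q3))
    (hep : ∀ x, ep x = -((q1 x * a + 2 * γ ^ 2 * q2 x * b) / (2 * γ ^ 2 * q3))) :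
    ey 0 = 0 ∧ ep 0 = 0 ∧ ey s = a ∧ ep s = b ∧
    (∀ x ∈ Set.Ioo 0 s,
      -(deriv (deriv ey) x) = -α⁻¹ * ep x ∧ -(deriv (deriv ep) x) = ey x) :=
  stmt_14_general r s α a b γ hr hrs hα hγ q1 q2 q3 hq1 hq2 hq3 ey ep hey hep
end

section
/- Let 0 < r < s < 1 and γ > 0 and define ρ_c(γ) = [g(γr)g(γ(1-s))]/[g(γs)g(γ(1-r))] with g(z) = sinh²z + sin²z. Then ρ_c(γ) ≤ ρ_e², where ρ_e = [r(1-s)]/[s(1-r)]. -/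
open Real Set

/-!
Writing `g z = sinh² z + sin² z`, the estimate follows from the monotonicity of `g z / z²` on
`(0, ∞)`, applied once to `γr ≤ γs` and once to `γ(1-s) ≤ γ(1-r)`. Since
`g z = (cosh 2z - cos 2z) / 2`, that monotonicity amounts to
`2 (cosh t - cos t) ≤ t (sinh t + sin t)` for `t ≥ 0`, which follows by differentiating twice
and using `sin t ≤ t ≤ sinh t`.
-/

lemma nonneg_of_map_zero_of_hasDerivAt_nonneg {f f' : ℝ → ℝ} (hf : ∀ x, HasDerivAt f (f' x) x)
    (hf' : ∀ x, 0 < x → 0 ≤ f' x) (h0 : f 0 = 0) {t : ℝ} (ht : 0 ≤ t) : 0 ≤ f t := by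
  have hmono : MonotoneOn f (Ici 0) :=
    monotoneOn_of_hasDerivWithinAt_nonneg (convex_Ici 0)
      (fun x _ => (hf x).continuousAt.continuousWithinAt) (fun x _ => (hf x).hasDerivWithinAt)
      (fun x hx => hf' x (by simpa using hx))
  exact h0 ▸ hmono self_mem_Ici ht ht

lemma sinh_add_sin_le_mul_cosh_add_cos {t : ℝ} (ht : 0 ≤ t) :
    sinh t + sin t ≤ t * (cosh t + cos t) := by
  have hderiv : ∀ x, HasDerivAt (fun t => t * (cosh t + cos t) - (sinh t + sin t))
      (x * (sinh x - sin x)) x := fun x => by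
    refine (((hasDerivAt_id x).mul ((hasDerivAt_cosh x).add (hasDerivAt_cos x))).sub
      ((hasDerivAt_sinh x).add (hasDerivAt_sin x))).congr_deriv ?_
    simp only [id_eq, Pi.add_apply]
    ring
  have hnonneg : ∀ x : ℝ, 0 < x → 0 ≤ x * (sinh x - sin x) := fun x hx =>
    mul_nonneg hx.le (by linarith [sin_le hx.le, self_lt_sinh_iff.mpr hx])
  linarith [nonneg_of_map_zero_of_hasDerivAt_nonneg hderiv hnonneg (by simp) ht]

lemma two_mul_cosh_sub_cos_le {t : ℝ} (ht : 0 ≤ t) :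
    2 * (cosh t - cos t) ≤ t * (sinh t + sin t) := by
  have hderiv : ∀ x, HasDerivAt (fun t => t * (sinh t + sin t) - 2 * (cosh t - cos t))
      (x * (cosh x + cos x) - (sinh x + sin x)) x := fun x => by
    refine (((hasDerivAt_id x).mul ((hasDerivAt_sinh x).add (hasDerivAt_sin x))).sub
      (((hasDerivAt_cosh x).sub (hasDerivAt_cos x)).const_mul 2)).congr_deriv ?_
    simp only [id_eq, Pi.add_apply]
    ring
  have hnonneg : ∀ x : ℝ, 0 < x → 0 ≤ x * (cosh x + cos x) - (sinh x + sin x) := fun x hx =>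
    sub_nonneg.mpr (sinh_add_sin_le_mul_cosh_add_cos hx.le)
  linarith [nonneg_of_map_zero_of_hasDerivAt_nonneg hderiv hnonneg (by simp) ht]

noncomputable def sinhSqAddSinSq (z : ℝ) : ℝ := sinh z ^ 2 + sin z ^ 2

lemma sinhSqAddSinSq_pos {z : ℝ} (hz : 0 < z) : 0 < sinhSqAddSinSq z :=
  add_pos_of_pos_of_nonneg (pow_pos (sinh_pos_iff.mpr hz) 2) (sq_nonneg _)

lemma hasDerivAt_sinhSqAddSinSq (x : ℝ) :
    HasDerivAt sinhSqAddSinSq (2 * sinh x * cosh x + 2 * sin x * cos x) x := by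
  refine (((hasDerivAt_sinh x).pow 2).add ((hasDerivAt_sin x).pow 2)).congr_deriv ?_
  ring

lemma monotoneOn_sinhSqAddSinSq_div_sq :
    MonotoneOn (fun z => sinhSqAddSinSq z / z ^ 2) (Ioi 0) := by
  have hderiv : ∀ x : ℝ, x ≠ 0 → HasDerivAt (fun z => sinhSqAddSinSq z / z ^ 2)
      (((2 * sinh x * cosh x + 2 * sin x * cos x) * x ^ 2 - sinhSqAddSinSq x * (2 * x)) /
        (x ^ 2) ^ 2) x := fun x hx => by
    have hsq : HasDerivAt (fun z : ℝ => z ^ 2) (2 * x) x := by simpa using hasDerivAt_pow 2 x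
    exact (hasDerivAt_sinhSqAddSinSq x).div hsq (pow_ne_zero 2 hx)
  refine monotoneOn_of_hasDerivWithinAt_nonneg (convex_Ioi 0)
    (fun x hx => (hderiv x (ne_of_gt hx)).continuousAt.continuousWithinAt)
    (fun x hx => (hderiv x (ne_of_gt (by simpa using hx))).hasDerivWithinAt) fun x hx => ?_
  have hx : 0 < x := by simpa using hx
  refine div_nonneg ?_ (sq_nonneg _)
  have hkey := two_mul_cosh_sub_cos_le (t := 2 * x) (by positivity)
  rw [sinh_two_mul, sin_two_mul, cosh_two_mul, cos_two_mul] at hkey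
  unfold sinhSqAddSinSq
  nlinarith [cosh_sq x, sin_sq_add_cos_sq x]

lemma sinhSqAddSinSq_div_le_sq_div {a b : ℝ} (ha : 0 < a) (hab : a ≤ b) :
    sinhSqAddSinSq a / sinhSqAddSinSq b ≤ (a / b) ^ 2 := by
  have hb : 0 < b := ha.trans_le hab
  have h := monotoneOn_sinhSqAddSinSq_div_sq (mem_Ioi.mpr ha) (mem_Ioi.mpr hb) hab
  rw [div_le_div_iff₀ (by positivity) (by positivity)] at h
  rw [div_pow, div_le_div_iff₀ (sinhSqAddSinSq_pos hb) (by positivity)]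
  linarith

/-- Estimate (A.11): with `g(z) = sinh²z + sin²z`, for `0 < r < s < 1` and
`γ > 0`, `ρ_c(γ) = g(γr)g(γ(1-s))/(g(γs)g(γ(1-r))) ≤ ρ_e²` with
`ρ_e = r(1-s)/(s(1-r))`. -/
theorem stmt_16 (r s γ : ℝ) (hr : 0 < r) (hrs : r < s) (hs : s < 1) (hγ : 0 < γ) :
    (((sinh (γ * r)) ^ 2 + (sin (γ * r)) ^ 2) *
        ((sinh (γ * (1 - s))) ^ 2 + (sin (γ * (1 - s))) ^ 2)) /
      (((sinh (γ * s)) ^ 2 + (sin (γ * s)) ^ 2) *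
        ((sinh (γ * (1 - r))) ^ 2 + (sin (γ * (1 - r))) ^ 2)) ≤
      ((r * (1 - s)) / (s * (1 - r))) ^ 2 := by
  have hs0 : 0 < s := hr.trans hrs
  have h1s : 0 < 1 - s := by linarith
  have h1r : 0 < 1 - r := by linarith
  calc _ = sinhSqAddSinSq (γ * r) / sinhSqAddSinSq (γ * s) *
        (sinhSqAddSinSq (γ * (1 - s)) / sinhSqAddSinSq (γ * (1 - r))) := mul_div_mul_comm _ _ _ _
    _ ≤ (γ * r / (γ * s)) ^ 2 * (γ * (1 - s) / (γ * (1 - r))) ^ 2 :=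
        mul_le_mul
          (sinhSqAddSinSq_div_le_sq_div (by positivity) (by gcongr))
          (sinhSqAddSinSq_div_le_sq_div (by positivity) (by gcongr))
          (div_nonneg (sinhSqAddSinSq_pos (by positivity)).le
            (sinhSqAddSinSq_pos (by positivity)).le)
          (sq_nonneg _)
    _ = ((r * (1 - s)) / (s * (1 - r))) ^ 2 := by
        rw [mul_div_mul_left _ _ hγ.ne', mul_div_mul_left _ _ hγ.ne', ← mul_pow, div_mul_div_comm]
end
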